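/- Let Ω = C([0,T],ℝ) and suppose ψ(t,ω) = ψ(t) does not depend on ω. Then the deterministic stopping time τ₀ ≡ 0 is not Pareto optimal with respect to 𝒜(0,ω) for any ω: the stopping time σ*(ω) = inf{s ∈ [0,T] : X*_s(ω) − X_s(ω) ≥ ψ(s)} satisfies R(0,ω;σ*,ω') < ψ(0) = R(0,ω;τ₀,ω') for all ω' ∈ Ω. -/

import Mathlib

/-!
For a continuous path the drawdown `X* − X` is continuous, equals `0 < ψ(0)` at time `0` and is
`≥ 0 = ψ(T)` at time `T`. Hence `σ*` is a genuine first crossing time: `0 < σ* ≤ T` and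
`X*_{σ*} − X_{σ*} = ψ(σ*)`, so the regret of `σ*` is `ψ(σ*) < ψ(0)`, whereas `τ₀ ≡ 0` has regret
`max{0, ψ(0)} = ψ(0)` on every path. Since `σ*` is attained, it is decided by the path up to
time `σ*`, i.e. it is a stopping time.
-/

open Set

noncomputable section

namespace SellingRegret

/-- Running maximum `X*_t(ω) = sup_{s ∈ [0,t]} X_s(ω)`, where `X_s(ω) = ω s`. -/
def Mstar (ω : ℝ → ℝ) (t : ℝ) : ℝ :=
  sSup (ω '' Set.Icc 0 t)

/-- `𝒜(t,ω)`: the trajectories in `Ω` agreeing with `ω` on `[0,t]`. -/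
def Hist (Ω : Set (ℝ → ℝ)) (t : ℝ) (ω : ℝ → ℝ) : Set (ℝ → ℝ) :=
  {ω' ∈ Ω | ∀ s ∈ Set.Icc 0 t, ω' s = ω s}

/-- A stopping time: a map `τ : Ω → [0,T]` such that whenever `τ(ω) ≤ t` and
`ω'` agrees with `ω` on `[0,t]`, one has `τ(ω') = τ(ω)`. -/
def IsStoppingTime (T : ℝ) (Ω : Set (ℝ → ℝ)) (τ : (ℝ → ℝ) → ℝ) : Prop :=
  (∀ ω ∈ Ω, τ ω ∈ Set.Icc 0 T) ∧
  ∀ ω ∈ Ω, ∀ t ∈ Set.Icc 0 T, τ ω ≤ t →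
    ∀ ω' ∈ Ω, (∀ s ∈ Set.Icc 0 t, ω' s = ω s) → τ ω' = τ ω

/-- Estimated regret `R(t,ω;τ,ω') = max{X*_{τ(ω')}(ω') − X_{τ(ω')}(ω'), ψ(τ(ω'),ω')}`
(it depends only on `τ` and `ω'`). -/
def regret (ψ : ℝ → (ℝ → ℝ) → ℝ) (τ : (ℝ → ℝ) → ℝ) (ω' : ℝ → ℝ) : ℝ :=
  max (Mstar ω' (τ ω') - ω' (τ ω')) (ψ (τ ω') ω')

/-- Worst-case estimated regret `ℛ(t,ω;τ) = sup_{ω' ∈ 𝒜(t,ω)} R(t,ω;τ,ω')`,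
valued in `[0,∞]`. -/
def worstRegret (Ω : Set (ℝ → ℝ)) (ψ : ℝ → (ℝ → ℝ) → ℝ)
    (t : ℝ) (ω : ℝ → ℝ) (τ : (ℝ → ℝ) → ℝ) : ENNReal :=
  ⨆ ω' ∈ Hist Ω t ω, ENNReal.ofReal (regret ψ τ ω')

/-- `σ*(ω) = inf {s ∈ [0,T] : X*_s(ω) − X_s(ω) ≥ ψ(s,ω)}`. -/
def sigmaStar (T : ℝ) (ψ : ℝ → (ℝ → ℝ) → ℝ) (ω : ℝ → ℝ) : ℝ :=
  sInf {s ∈ Set.Icc 0 T | ψ s ω ≤ Mstar ω s - ω s}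

/-- `τ ∈ 𝒯_t(ω)`: `τ(ω') ≥ t` for all `ω' ∈ 𝒜(t,ω)`. -/
def Admissible (Ω : Set (ℝ → ℝ)) (t : ℝ) (ω : ℝ → ℝ) (τ : (ℝ → ℝ) → ℝ) : Prop :=
  ∀ ω' ∈ Hist Ω t ω, t ≤ τ ω'

/-- `σ` is optimal with respect to `𝒜(t,ω)`. -/
def OptimalAt (T : ℝ) (Ω : Set (ℝ → ℝ)) (ψ : ℝ → (ℝ → ℝ) → ℝ)
    (t : ℝ) (ω : ℝ → ℝ) (σ : (ℝ → ℝ) → ℝ) : Prop :=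
  IsStoppingTime T Ω σ ∧ Admissible Ω t ω σ ∧
  ∀ τ, IsStoppingTime T Ω τ → Admissible Ω t ω τ →
    worstRegret Ω ψ t ω σ ≤ worstRegret Ω ψ t ω τ

/-- `σ` is Pareto optimal with respect to `𝒜(t,ω)`. -/
def ParetoOptimalAt (T : ℝ) (Ω : Set (ℝ → ℝ)) (ψ : ℝ → (ℝ → ℝ) → ℝ)
    (t : ℝ) (ω : ℝ → ℝ) (σ : (ℝ → ℝ) → ℝ) : Prop :=
  IsStoppingTime T Ω σ ∧ Admissible Ω t ω σ ∧
  ¬ ∃ τ, IsStoppingTime T Ω τ ∧ Admissible Ω t ω τ ∧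
      (∀ ω' ∈ Hist Ω t ω, regret ψ τ ω' ≤ regret ψ σ ω') ∧
      ∃ ω'' ∈ Hist Ω t ω, regret ψ τ ω'' < regret ψ σ ω''

/-- `σ` is perfect: optimal and Pareto optimal with respect to `𝒜(t,ω)`
whenever it is admissible for `𝒜(t,ω)`. -/
def Perfect (T : ℝ) (Ω : Set (ℝ → ℝ)) (ψ : ℝ → (ℝ → ℝ) → ℝ)
    (σ : (ℝ → ℝ) → ℝ) : Prop :=
  IsStoppingTime T Ω σ ∧
  ∀ t ∈ Set.Icc 0 T, ∀ ω ∈ Ω, Admissible Ω t ω σ →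
    OptimalAt T Ω ψ t ω σ ∧ ParetoOptimalAt T Ω ψ t ω σ

/-- Conditions (A) and (B) of Theorem 2 for a stopping time `σ`. -/
def CondAB (T : ℝ) (Ω : Set (ℝ → ℝ)) (ψ : ℝ → (ℝ → ℝ) → ℝ)
    (σ : (ℝ → ℝ) → ℝ) : Prop :=
  ∀ τ, IsStoppingTime T Ω τ → ∀ ω ∈ Ω,
    (σ ω < τ ω → ∃ ω' ∈ Hist Ω (σ ω) ω, regret ψ σ ω' < regret ψ τ ω') ∧
    (τ ω < σ ω → ∀ ω' ∈ Hist Ω (τ ω) ω, regret ψ σ ω' < regret ψ τ ω')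

/-- `Ω = C([0,T],ℝ)`: all trajectories continuous on `[0,T]`. -/
def OmegaC (T : ℝ) : Set (ℝ → ℝ) :=
  {ω | ContinuousOn ω (Set.Icc 0 T)}

/-- The two-sided Lipschitz corridor of Example 2:
`−L₁(t−s) ≤ ω(t) − ω(s) ≤ L₂(t−s)` for `0 ≤ s ≤ t ≤ T`. -/
def OmegaL (T L₁ L₂ : ℝ) : Set (ℝ → ℝ) :=
  {ω | ∀ s t : ℝ, 0 ≤ s → s ≤ t → t ≤ T →
    -L₁ * (t - s) ≤ ω t - ω s ∧ ω t - ω s ≤ L₂ * (t - s)}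

theorem csInf_eq_of_forall_le_mem_iff {α : Type*} [ConditionallyCompleteLinearOrder α]
    {S S' : Set α} {t : α} (hS : BddBelow S) (hS' : BddBelow S') (hmem : sInf S ∈ S)
    (ht : sInf S ≤ t) (h : ∀ x ≤ t, x ∈ S' ↔ x ∈ S) : sInf S' = sInf S := by
  have hmem' : sInf S ∈ S' := (h _ ht).2 hmem
  refine le_antisymm (csInf_le hS' hmem') (le_csInf ⟨_, hmem'⟩ fun x hx => ?_)
  rcases le_or_gt x t with hxt | htx
  · exact csInf_le hS ((h x hxt).1 hx)
  · exact ht.trans htx.le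

theorem csInf_setOf_le_mem_Ioc_and_eq {g h : ℝ → ℝ} {a b : ℝ} (hab : a ≤ b)
    (hg : ContinuousOn g (Icc a b)) (hh : ContinuousOn h (Icc a b))
    (ha : h a < g a) (hb : g b ≤ h b) :
    sInf {x ∈ Icc a b | g x ≤ h x} ∈ Ioc a b ∧
      g (sInf {x ∈ Icc a b | g x ≤ h x}) = h (sInf {x ∈ Icc a b | g x ≤ h x}) := by
  set S := {x ∈ Icc a b | g x ≤ h x}
  have hbdd : BddBelow S := ⟨a, fun x hx => hx.1.1⟩
  have hmem : sInf S ∈ S :=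
    (isClosed_Icc.isClosed_le hg hh).csInf_mem ⟨b, right_mem_Icc.2 hab, hb⟩ hbdd
  have hgt : a < sInf S := hmem.1.1.lt_of_ne fun hc => (hc ▸ hmem.2).not_gt ha
  obtain ⟨c, hc, hgc⟩ : ∃ c ∈ Icc a (sInf S), h c - g c = 0 :=
    intermediate_value_Icc hgt.le ((hh.sub hg).mono (Icc_subset_Icc le_rfl hmem.1.2))
      ⟨sub_nonpos.2 ha.le, sub_nonneg.2 hmem.2⟩
  have hc_eq : c = sInf S :=
    le_antisymm hc.2 (csInf_le hbdd ⟨⟨hc.1, hc.2.trans hmem.1.2⟩, by linarith⟩)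
  exact ⟨⟨hgt, hmem.1.2⟩, by rw [← hc_eq]; linarith⟩

theorem Mstar_zero (ω : ℝ → ℝ) : Mstar ω 0 = ω 0 := by
  simp [Mstar]

theorem Mstar_congr {ω ω' : ℝ → ℝ} {t : ℝ} (h : ∀ s ∈ Icc 0 t, ω' s = ω s) :
    Mstar ω' t = Mstar ω t := by
  rw [Mstar, Mstar, image_congr h]

theorem self_le_Mstar {ω : ℝ → ℝ} {t : ℝ} (hω : ContinuousOn ω (Icc 0 t)) (ht : 0 ≤ t) :
    ω t ≤ Mstar ω t :=
  le_csSup (isCompact_Icc.bddAbove_image hω) ⟨t, right_mem_Icc.2 ht, rfl⟩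

theorem continuousOn_Mstar {ω : ℝ → ℝ} {T : ℝ} (hT : 0 ≤ T) (hω : ContinuousOn ω (Icc 0 T)) :
    ContinuousOn (Mstar ω) (Icc 0 T) := by
  -- On `[0,T]`, `Mstar ω t` is a supremum over the fixed compact `[0,T]` of `u ↦ ω (min u t)`;
  -- clamping to `[0,T]` makes this integrand jointly continuous.
  set clamp : ℝ → ℝ := fun x => max 0 (min x T)
  have hclamp : ∀ x ∈ Icc 0 T, clamp x = x := fun x hx => by
    simp only [clamp, min_eq_left hx.2, max_eq_right hx.1]
  have hF : Continuous ↿(fun t u => ω (clamp (min u t))) :=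
    hω.comp_continuous (by fun_prop) fun _ => ⟨le_max_left _ _, max_le hT (min_le_right _ _)⟩
  refine ((isCompact_Icc (a := 0) (b := T)).continuous_sSup hF).continuousOn.congr fun t ht => ?_
  have himage : (fun u => ω (clamp (min u t))) '' Icc 0 T = ω '' Icc 0 t := by
    ext y
    constructor
    · rintro ⟨u, hu, rfl⟩
      have hmin : min u t ∈ Icc 0 t := ⟨le_min hu.1 ht.1, min_le_right _ _⟩
      exact ⟨min u t, hmin, (hclamp _ ⟨hmin.1, hmin.2.trans ht.2⟩).symm ▸ rfl⟩
    · rintro ⟨u, hu, rfl⟩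
      refine ⟨u, ⟨hu.1, hu.2.trans ht.2⟩, ?_⟩
      simp only [min_eq_left hu.2, hclamp u ⟨hu.1, hu.2.trans ht.2⟩]
  simp only [Mstar, himage]

section sigmaStar

variable {T : ℝ} {ψ : ℝ → ℝ}

theorem sigmaStar_mem_Ioc_and_eq (hT : 0 ≤ T) (hψ0 : 0 < ψ 0) (hψT : ψ T = 0)
    (hψc : ContinuousOn ψ (Icc 0 T)) {ω : ℝ → ℝ} (hω : ContinuousOn ω (Icc 0 T)) :
    sigmaStar T (fun t _ => ψ t) ω ∈ Ioc 0 T ∧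
      ψ (sigmaStar T (fun t _ => ψ t) ω) =
        Mstar ω (sigmaStar T (fun t _ => ψ t) ω) - ω (sigmaStar T (fun t _ => ψ t) ω) :=
  csInf_setOf_le_mem_Ioc_and_eq hT hψc ((continuousOn_Mstar hT hω).sub hω)
    (by simpa [Mstar_zero] using hψ0)
    (by simpa [hψT] using self_le_Mstar hω hT)

theorem isStoppingTime_sigmaStar (hT : 0 ≤ T) (hψ0 : 0 < ψ 0) (hψT : ψ T = 0)
    (hψc : ContinuousOn ψ (Icc 0 T)) :
    IsStoppingTime T (OmegaC T) (sigmaStar T (fun t _ => ψ t)) := by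
  refine ⟨fun ω hω => Ioc_subset_Icc_self (sigmaStar_mem_Ioc_and_eq hT hψ0 hψT hψc hω).1,
    fun ω hω t _ hσt ω' _ hagree => ?_⟩
  obtain ⟨hσ, hσeq⟩ := sigmaStar_mem_Ioc_and_eq hT hψ0 hψT hψc hω
  refine csInf_eq_of_forall_le_mem_iff ⟨0, fun s hs => hs.1.1⟩ ⟨0, fun s hs => hs.1.1⟩
    ⟨Ioc_subset_Icc_self hσ, hσeq.le⟩ hσt fun s hst => ?_
  by_cases hs : 0 ≤ s
  · simp only [mem_ofPred_eq, Mstar_congr fun u hu => hagree u ⟨hu.1, hu.2.trans hst⟩,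
      hagree s ⟨hs, hst⟩]
  · simp only [mem_ofPred_eq, mem_Icc, hs, false_and]

theorem regret_sigmaStar_lt (hT : 0 ≤ T) (hψ0 : 0 < ψ 0) (hψT : ψ T = 0)
    (hψc : ContinuousOn ψ (Icc 0 T)) (hψa : StrictAntiOn ψ (Icc 0 T))
    {ω : ℝ → ℝ} (hω : ContinuousOn ω (Icc 0 T)) :
    regret (fun t _ => ψ t) (sigmaStar T (fun t _ => ψ t)) ω < ψ 0 := by
  obtain ⟨hσ, hσeq⟩ := sigmaStar_mem_Ioc_and_eq hT hψ0 hψT hψc hω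
  have hlt : ψ (sigmaStar T (fun t _ => ψ t) ω) < ψ 0 :=
    hψa (left_mem_Icc.2 hT) (Ioc_subset_Icc_self hσ) hσ.1
  exact max_lt (hσeq ▸ hlt) hlt

end sigmaStar

theorem regret_const_zero {ψ : ℝ → ℝ} (hψ0 : 0 ≤ ψ 0) (ω : ℝ → ℝ) :
    regret (fun t _ => ψ t) (fun _ => 0) ω = ψ 0 := by
  simp [regret, Mstar_zero, hψ0]

theorem not_paretoOptimalAt_zero_of_forall_regret_lt {T : ℝ} {Ω : Set (ℝ → ℝ)}
    {ψ : ℝ → (ℝ → ℝ) → ℝ} {ω : ℝ → ℝ} {σ τ : (ℝ → ℝ) → ℝ} (hτ : IsStoppingTime T Ω τ)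
    (hω : ω ∈ Ω) (hlt : ∀ ω' ∈ Hist Ω 0 ω, regret ψ τ ω' < regret ψ σ ω') :
    ¬ ParetoOptimalAt T Ω ψ 0 ω σ := fun ⟨_, _, hno⟩ =>
  hno ⟨τ, hτ, fun ω' hω' => (hτ.1 ω' hω'.1).1, fun ω' hω' => (hlt ω' hω').le,
    ω, ⟨hω, fun _ _ => rfl⟩, hlt ω ⟨hω, fun _ _ => rfl⟩⟩

theorem stmt12_general (T : ℝ) (hT : 0 < T)
    (ψ : ℝ → ℝ) (hψT : ψ T = 0)
    (hψc : ContinuousOn ψ (Set.Icc 0 T))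
    (hψa : StrictAntiOn ψ (Set.Icc 0 T))
    (ω : ℝ → ℝ) (hω : ω ∈ OmegaC T) :
    ¬ ParetoOptimalAt T (OmegaC T) (fun t _ => ψ t) 0 ω (fun _ => 0) ∧
    ∀ ω' ∈ OmegaC T,
      regret (fun t _ => ψ t) (sigmaStar T (fun t _ => ψ t)) ω' < ψ 0 ∧
      ψ 0 = regret (fun t _ => ψ t) (fun _ => 0) ω' := by
  have hψ0 : 0 < ψ 0 := hψT ▸ hψa (left_mem_Icc.2 hT.le) (right_mem_Icc.2 hT.le) hT
  have hlt : ∀ ω' ∈ OmegaC T,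
      regret (fun t _ => ψ t) (sigmaStar T (fun t _ => ψ t)) ω' < ψ 0 :=
    fun ω' hω' => regret_sigmaStar_lt hT.le hψ0 hψT hψc hψa hω'
  refine ⟨not_paretoOptimalAt_zero_of_forall_regret_lt
      (isStoppingTime_sigmaStar hT.le hψ0 hψT hψc) hω fun ω' hω' => ?_,
    fun ω' hω' => ⟨hlt ω' hω', (regret_const_zero hψ0.le ω').symm⟩⟩
  rw [regret_const_zero hψ0.le]
  exact hlt ω' hω'.1

/-- Example 1: for `Ω = C([0,T],ℝ)` and `ψ` independent of `ω`,
the deterministic stopping time `τ₀ ≡ 0` is not Pareto optimal with respect to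
`𝒜(0,ω)` for any `ω`: the stopping time `σ*` satisfies
`R(0,ω;σ*,ω') < ψ(0) = R(0,ω;τ₀,ω')` for all `ω' ∈ Ω`. -/
theorem stmt12 (T : ℝ) (hT : 0 < T)
    (ψ : ℝ → ℝ) (hψT : ψ T = 0)
    (hψnn : ∀ t ∈ Set.Icc 0 T, 0 ≤ ψ t)
    (hψc : ContinuousOn ψ (Set.Icc 0 T))
    (hψa : StrictAntiOn ψ (Set.Icc 0 T))
    (ω : ℝ → ℝ) (hω : ω ∈ OmegaC T) :
    ¬ ParetoOptimalAt T (OmegaC T) (fun t _ => ψ t) 0 ω (fun _ => 0) ∧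
    ∀ ω' ∈ OmegaC T,
      regret (fun t _ => ψ t) (sigmaStar T (fun t _ => ψ t)) ω' < ψ 0 ∧
      ψ 0 = regret (fun t _ => ψ t) (fun _ => 0) ω' :=
  stmt12_general T hT ψ hψT hψc hψa ω hω

end SellingRegret

end
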